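/- arXiv:2102.06923 — 5 statements merged into one kernel-verified Lean document; each statement's English description precedes it below -/
import Mathlib

section
/- Let V, Q be Hilbert spaces, b : V × Q → ℝ a continuous bilinear form satisfying the inf-sup condition with constant β > 0 on the full space V, and T : Q → V the supremizer operator with (Tq,v)_V = b(v,q) for all v. Let Q_N ⊆ Q be a subspace and V_N ⊆ V a subspace with Tq ∈ V_N for every q ∈ Q_N. Then b satisfies the inf-sup condition on V_N × Q_N with the same constant β, i.e., for every q ∈ Q_N there exists v ∈ V_N with v ≠ 0 and b(v,q) ≥ β‖q‖_Q‖v‖_V. -/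
/-!
The supremizer `T q` is itself an optimal test vector: `b (T q) q = ‖T q‖²`, while the inf-sup
condition on all of `V` forces `‖T q‖ ≥ β ‖q‖`. Since `T q ∈ V_N`, it witnesses the discrete bound.
-/

open RealInnerProductSpace

section InnerProductSpace

variable {E : Type*} [NormedAddCommGroup E] [InnerProductSpace ℝ E]

lemma le_norm_of_mul_norm_le_inner {u v : E} (hv : v ≠ 0) {c : ℝ} (h : c * ‖v‖ ≤ ⟪u, v⟫) :
    c ≤ ‖u‖ :=
  le_of_mul_le_mul_right (h.trans (real_inner_le_norm u v)) (norm_pos_iff.mpr hv)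

lemma mul_norm_le_inner_self_of_le_norm {u : E} {c : ℝ} (h : c ≤ ‖u‖) : c * ‖u‖ ≤ ⟪u, u⟫ := by
  rw [real_inner_self_eq_norm_mul_norm]
  exact mul_le_mul_of_nonneg_right h (norm_nonneg u)

end InnerProductSpace

theorem stmt_4_general {V Q : Type*}
    [NormedAddCommGroup V] [InnerProductSpace ℝ V]
    [NormedAddCommGroup Q] [InnerProductSpace ℝ Q]
    (b : V →ₗ[ℝ] Q →ₗ[ℝ] ℝ)
    (β : ℝ) (hβ : 0 < β)
    (hinfsup : ∀ q : Q, q ≠ 0 → ∃ v : V, v ≠ 0 ∧ β * ‖q‖ * ‖v‖ ≤ b v q)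
    (T : Q → V)
    (hT : ∀ (q : Q) (v : V), (inner ℝ (T q) v : ℝ) = b v q)
    (VN : Submodule ℝ V) (QN : Submodule ℝ Q)
    (hTN : ∀ q ∈ QN, T q ∈ VN) :
    ∀ q ∈ QN, q ≠ 0 → ∃ v ∈ VN, v ≠ 0 ∧ β * ‖q‖ * ‖v‖ ≤ b v q := by
  intro q hqN hq
  obtain ⟨v, hv, hβv⟩ := hinfsup q hq
  have hβT : β * ‖q‖ ≤ ‖T q‖ := le_norm_of_mul_norm_le_inner hv (by rwa [hT])
  have hTq : T q ≠ 0 := norm_pos_iff.mp ((mul_pos hβ (norm_pos_iff.mpr hq)).trans_le hβT)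
  refine ⟨T q, hTN q hqN, hTq, ?_⟩
  rw [← hT]
  exact mul_norm_le_inner_self_of_le_norm hβT

theorem stmt_4 {V Q : Type*}
    [NormedAddCommGroup V] [InnerProductSpace ℝ V] [CompleteSpace V]
    [NormedAddCommGroup Q] [InnerProductSpace ℝ Q] [CompleteSpace Q]
    (b : V →ₗ[ℝ] Q →ₗ[ℝ] ℝ)
    (hbcont : ∃ C : ℝ, ∀ (v : V) (q : Q), |b v q| ≤ C * ‖v‖ * ‖q‖)
    (β : ℝ) (hβ : 0 < β)
    (hinfsup : ∀ q : Q, q ≠ 0 → ∃ v : V, v ≠ 0 ∧ β * ‖q‖ * ‖v‖ ≤ b v q)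
    (T : Q → V)
    (hT : ∀ (q : Q) (v : V), (inner ℝ (T q) v : ℝ) = b v q)
    (VN : Submodule ℝ V) (QN : Submodule ℝ Q)
    (hTN : ∀ q ∈ QN, T q ∈ VN) :
    ∀ q ∈ QN, q ≠ 0 → ∃ v ∈ VN, v ≠ 0 ∧ β * ‖q‖ * ‖v‖ ≤ b v q :=
  stmt_4_general b β hβ hinfsup T hT VN QN hTN
end

section
/- Let V, Q be Hilbert spaces, a : V × V → ℝ symmetric, continuous with constant γ, coercive with constant α > 0, and b : V × Q → ℝ continuous satisfying the inf-sup condition with constant β > 0. Suppose (e_u, e_p) ∈ V × Q satisfies a(e_u,v) + b(v,e_p) = r₁(v) for all v ∈ V and b(e_u,q) = r₂(q) for all q ∈ Q, where r₁ ∈ V', r₂ ∈ Q'. Then ‖e_u‖_V ≤ (1/α)‖r₁‖_{V'} + (2/β)√(γ/α)‖r₂‖_{Q'}. -/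
open RealInnerProductSpace

theorem aux_sq_le_stmt15 {x y : ℝ} (hx : 0 ≤ x) (hy : 0 ≤ y) (h : x * x ≤ y * y) :
    x ≤ y := by nlinarith

set_option maxHeartbeats 2000000 in
theorem stmt_15 {V Q : Type*}
    [NormedAddCommGroup V] [InnerProductSpace ℝ V] [CompleteSpace V]
    [NormedAddCommGroup Q] [InnerProductSpace ℝ Q] [CompleteSpace Q]
    (a : V →ₗ[ℝ] V →ₗ[ℝ] ℝ) (b : V →ₗ[ℝ] Q →ₗ[ℝ] ℝ)
    (α γ β : ℝ) (hα : 0 < α) (hβ : 0 < β)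
    (hsymm : ∀ u v : V, a u v = a v u)
    (hcont : ∀ u v : V, |a u v| ≤ γ * ‖u‖ * ‖v‖)
    (hcoer : ∀ u : V, α * ‖u‖ ^ 2 ≤ a u u)
    (hbcont : ∃ C : ℝ, ∀ (v : V) (q : Q), |b v q| ≤ C * ‖v‖ * ‖q‖)
    (hinfsup : ∀ q : Q, q ≠ 0 → ∃ v : V, v ≠ 0 ∧ β * ‖q‖ * ‖v‖ ≤ b v q)
    (r₁ : V →L[ℝ] ℝ) (r₂ : Q →L[ℝ] ℝ) (eu : V) (ep : Q)
    (h1 : ∀ v : V, a eu v + b v ep = r₁ v)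
    (h2 : ∀ q : Q, b eu q = r₂ q) :
    ‖eu‖ ≤ (1 / α) * ‖r₁‖ + (2 / β) * Real.sqrt (γ / α) * ‖r₂‖ := by
  by_cases heu : eu = 0
  · subst heu
    simp only [norm_zero]
    positivity
  -- nontrivial V: γ ≥ α
  have heupos : (0:ℝ) < ‖eu‖ := norm_pos_iff.mpr heu
  have hγα : α ≤ γ := by
    have h1' := hcoer eu
    have h2' := (le_abs_self _).trans (hcont eu eu)
    have h3 : ‖eu‖ ^ 2 = ‖eu‖ * ‖eu‖ := sq ‖eu‖
    nlinarith [mul_pos heupos heupos]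
  have hγ0 : (0:ℝ) < γ := lt_of_lt_of_le hα hγα
  obtain ⟨C, hC⟩ := hbcont
  -- continuous bilinear version of b
  set b' : V →L[ℝ] Q →L[ℝ] ℝ :=
    LinearMap.mkContinuous₂ b C (fun v q => by
      simpa [Real.norm_eq_abs] using hC v q) with hb'def
  have hb' : ∀ v q, b' v q = b v q := fun v q => rfl
  -- the adjoint-type map B* : Q → V with ⟪B* q, v⟫ = b v q
  let Bs0 : Q →ₗ[ℝ] V :=
    { toFun := fun q => (InnerProductSpace.toDual ℝ V).symm (b'.flip q)
      map_add' := by intro p q; simp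
      map_smul' := by intro r q; simp }
  set Bs : Q →L[ℝ] V := Bs0.mkContinuous ‖b'.flip‖ (fun q => by
    simpa [Bs0] using b'.flip.le_opNorm q) with hBsdef
  have hBs : ∀ (q : Q) (v : V), ⟪Bs q, v⟫ = b v q := by
    intro q v
    show ⟪(InnerProductSpace.toDual ℝ V).symm (b'.flip q), v⟫ = b v q
    rw [InnerProductSpace.toDual_symm_apply]
    rfl
  -- lower bound on B*
  have hlow : ∀ q : Q, β * ‖q‖ ≤ ‖Bs q‖ := by
    intro q
    rcases eq_or_ne q 0 with rfl | hq
    · simp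
    · obtain ⟨v, hv0, hv⟩ := hinfsup q hq
      have hvpos : (0:ℝ) < ‖v‖ := norm_pos_iff.mpr hv0
      have : b v q = ⟪Bs q, v⟫ := (hBs q v).symm
      have hle : β * ‖q‖ * ‖v‖ ≤ ‖Bs q‖ * ‖v‖ := by
        calc β * ‖q‖ * ‖v‖ ≤ b v q := hv
          _ = ⟪Bs q, v⟫ := (hBs q v).symm
          _ ≤ ‖Bs q‖ * ‖v‖ := real_inner_le_norm _ _
      exact le_of_mul_le_mul_right hle hvpos
  -- the coercive bilinear form c p q = ⟪B* p, B* q⟫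
  set c : Q →L[ℝ] Q →L[ℝ] ℝ := (((innerSL ℝ).comp Bs).flip.comp Bs).flip with hcdef
  have hc : ∀ p q : Q, c p q = ⟪Bs p, Bs q⟫ := fun p q => rfl
  clear_value Bs c
  have coercive : IsCoercive c := by
    refine ⟨β * β, mul_pos hβ hβ, fun u => ?_⟩
    have h1' := hlow u
    have h2' : c u u = ‖Bs u‖ * ‖Bs u‖ := by
      rw [hc]; exact real_inner_self_eq_norm_mul_norm _
    have h3' := mul_self_le_mul_self (by positivity : (0:ℝ) ≤ β * ‖u‖) h1'
    calc β * β * ‖u‖ * ‖u‖ = (β * ‖u‖) * (β * ‖u‖) := by ring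
      _ ≤ ‖Bs u‖ * ‖Bs u‖ := h3'
      _ = c u u := h2'.symm
  set E := coercive.continuousLinearEquivOfBilin with hEdef
  set y : Q := (InnerProductSpace.toDual ℝ Q).symm r₂ with hydef
  set p₀ : Q := E.symm y with hp₀def
  have hcp : ∀ q : Q, c p₀ q = r₂ q := by
    intro q
    have := coercive.continuousLinearEquivOfBilin_apply p₀ q
    rw [← hEdef] at this
    rw [← this, hp₀def, E.apply_symm_apply, hydef,
      InnerProductSpace.toDual_symm_apply]
  set w : V := Bs p₀ with hwdef
  have hbw : ∀ q : Q, b w q = r₂ q := by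
    intro q
    rw [← hBs q w, hwdef, real_inner_comm, ← hc, hcp]
  -- norm bound on w
  have hw2 : ‖w‖ * ‖w‖ = r₂ p₀ := by
    rw [← hcp p₀, hc, hwdef, real_inner_self_eq_norm_mul_norm]
  have hwlow : β * ‖p₀‖ ≤ ‖w‖ := hlow p₀
  clear_value E y p₀ w
  clear hEdef hydef hp₀def hwdef hcdef hb' hcp hc hlow hBs coercive hBsdef
  clear_value b' Bs0
  clear hb'def Bs0 b' hC hinfsup
  have hp₀n : β * β * ‖p₀‖ ≤ ‖r₂‖ := by
    rcases eq_or_ne p₀ 0 with h | h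
    · simp [h, norm_nonneg]
    · have hpos : (0:ℝ) < ‖p₀‖ := norm_pos_iff.mpr h
      have hle : β * β * ‖p₀‖ * ‖p₀‖ ≤ ‖r₂‖ * ‖p₀‖ := by
        have h2' : r₂ p₀ ≤ ‖r₂‖ * ‖p₀‖ := (le_abs_self _).trans (r₂.le_opNorm p₀)
        nlinarith [norm_nonneg p₀, norm_nonneg w, hw2, hwlow,
          mul_self_le_mul_self (by positivity : (0:ℝ) ≤ β * ‖p₀‖) hwlow]
      exact le_of_mul_le_mul_right hle hpos
  have hwle : ‖w‖ ≤ ‖r₂‖ / β := by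
    have hk : (0:ℝ) ≤ ‖r₂‖ / β := div_nonneg (norm_nonneg _) hβ.le
    have hsq : ‖w‖ * ‖w‖ ≤ (‖r₂‖ / β) * (‖r₂‖ / β) := by
      have h2' : r₂ p₀ ≤ ‖r₂‖ * ‖p₀‖ := (le_abs_self _).trans (r₂.le_opNorm p₀)
      rw [hw2]
      rw [div_mul_div_comm]
      rw [le_div_iff₀ (by positivity)]
      have hx := mul_le_mul_of_nonneg_left hp₀n (norm_nonneg (r₂ : Q →L[ℝ] ℝ))
      have hy := mul_le_mul_of_nonneg_right h2' (by positivity : (0:ℝ) ≤ β * β)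
      nlinarith
    exact aux_sq_le_stmt15 (norm_nonneg w) hk hsq
  -- Cauchy-Schwarz for a
  have haCS : ∀ x y' : V, a x y' * a x y' ≤ a x x * a y' y' := by
    intro x y'
    have h0 : ∀ t : ℝ, 0 ≤ a y' y' * (t * t) + (2 * a x y') * t + a x x := by
      intro t
      have hexp : a (x + t • y') (x + t • y') =
          a y' y' * (t * t) + (2 * a x y') * t + a x x := by
        simp only [map_add, map_smul, LinearMap.add_apply, LinearMap.smul_apply,
          smul_eq_mul]
        rw [hsymm y' x]; ring
      have hge := hcoer (x + t • y')
      nlinarith [sq_nonneg ‖x + t • y'‖]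
    have hd := discrim_le_zero h0
    rw [discrim] at hd
    nlinarith
  -- z = eu - w lies in ker of b
  set z : V := eu - w with hzdef
  have hA0 : (0:ℝ) ≤ a z z := le_trans (by positivity) (hcoer z)
  have haz : a z z = r₁ z - a w z := by
    have hbz : b z ep = 0 := by
      have he : b z ep = b eu ep - b w ep := by
        rw [hzdef]; simp [map_sub]
      rw [he, h2 ep, hbw ep, sub_self]
    have hsplit : a z z = a eu z - a w z := by
      rw [hzdef]; simp only [map_sub, LinearMap.sub_apply]
      linarith [hsymm w eu]
    rw [hsplit]
    have h1z := h1 z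
    rw [hzdef] at hbz h1z ⊢
    linarith
  have heuz : ‖eu‖ ≤ ‖z‖ + ‖w‖ := by
    have he : eu = z + w := by rw [hzdef]; abel
    rw [he]; exact norm_add_le _ _
  clear_value z
  clear hzdef hbw h2 h1
  -- energy norm quantities
  set s : ℝ := Real.sqrt (a z z) with hsdef
  have hss : s * s = a z z := Real.mul_self_sqrt hA0
  have hs0 : (0:ℝ) ≤ s := Real.sqrt_nonneg _
  set sa : ℝ := Real.sqrt α with hsadef
  have hsa : sa * sa = α := Real.mul_self_sqrt hα.le
  have hsa0 : (0:ℝ) < sa := Real.sqrt_pos.mpr hα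
  set sg : ℝ := Real.sqrt γ with hsgdef
  have hsg : sg * sg = γ := Real.mul_self_sqrt hγ0.le
  have hsg0 : (0:ℝ) < sg := Real.sqrt_pos.mpr hγ0
  -- ‖z‖ ≤ s / sa
  have hzle : sa * ‖z‖ ≤ s := by
    refine aux_sq_le_stmt15 (by positivity) hs0 ?_
    have h1' : α * (‖z‖ * ‖z‖) ≤ a z z := by
      simpa [pow_two] using hcoer z
    calc (sa * ‖z‖) * (sa * ‖z‖) = (sa * sa) * (‖z‖ * ‖z‖) := by ring
      _ = α * (‖z‖ * ‖z‖) := by rw [hsa]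
      _ ≤ a z z := h1'
      _ = s * s := hss.symm
  -- |a w z| ≤ sg * ‖w‖ * s
  have hawz : |a w z| ≤ sg * ‖w‖ * s := by
    have hcs := haCS w z
    have haww : a w w ≤ γ * (‖w‖ * ‖w‖) := by
      have := (le_abs_self _).trans (hcont w w)
      nlinarith
    have hrhs0 : (0:ℝ) ≤ sg * ‖w‖ * s := by positivity
    refine aux_sq_le_stmt15 (abs_nonneg _) hrhs0 ?_
    have habs : |a w z| * |a w z| = a w z * a w z := abs_mul_abs_self _
    rw [habs]
    have h0' : (0:ℝ) ≤ a w w := le_trans (by positivity) (hcoer w)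
    calc a w z * a w z ≤ a w w * a z z := hcs
      _ ≤ (γ * (‖w‖ * ‖w‖)) * a z z := mul_le_mul_of_nonneg_right haww hA0
      _ = (sg * ‖w‖ * s) * (sg * ‖w‖ * s) := by rw [← hss, ← hsg]; ring
  -- s ≤ K
  have hsK : s ≤ ‖r₁‖ / sa + sg * ‖w‖ := by
    have hK0 : (0:ℝ) ≤ ‖r₁‖ / sa + sg * ‖w‖ := by positivity
    rcases eq_or_lt_of_le hs0 with h | h
    · linarith
    · have hAle : a z z ≤ (‖r₁‖ / sa + sg * ‖w‖) * s := by
        have hr1 : r₁ z ≤ ‖r₁‖ * ‖z‖ := (le_abs_self _).trans (r₁.le_opNorm z)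
        have hz2 : ‖z‖ ≤ s / sa := by
          rw [le_div_iff₀ hsa0]; nlinarith [hzle]
        have hawz' : a w z ≥ -(sg * ‖w‖ * s) := neg_le_of_abs_le hawz
        have : a z z ≤ ‖r₁‖ * (s / sa) + sg * ‖w‖ * s := by
          rw [haz]
          have : ‖r₁‖ * ‖z‖ ≤ ‖r₁‖ * (s / sa) :=
            mul_le_mul_of_nonneg_left hz2 (norm_nonneg _)
          linarith [hr1]
        calc a z z ≤ ‖r₁‖ * (s / sa) + sg * ‖w‖ * s := this
          _ = (‖r₁‖ / sa + sg * ‖w‖) * s := by ring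
      rw [← hss] at hAle
      exact le_of_mul_le_mul_right (by linarith) h
  -- ‖z‖ ≤ ‖r₁‖/α + (sg/sa) ‖w‖
  have hzfin : ‖z‖ ≤ ‖r₁‖ / α + (sg / sa) * ‖w‖ := by
    have h1' : sa * ‖z‖ ≤ ‖r₁‖ / sa + sg * ‖w‖ := le_trans hzle hsK
    have : ‖z‖ ≤ (‖r₁‖ / sa + sg * ‖w‖) / sa := by
      rw [le_div_iff₀ hsa0]; nlinarith
    calc ‖z‖ ≤ (‖r₁‖ / sa + sg * ‖w‖) / sa := this
      _ = ‖r₁‖ / (sa * sa) + (sg / sa) * ‖w‖ := by field_simp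
      _ = ‖r₁‖ / α + (sg / sa) * ‖w‖ := by rw [hsa]
  -- √(γ/α) = sg / sa, and it is ≥ 1
  have hsqdiv : Real.sqrt (γ / α) = sg / sa := Real.sqrt_div hγ0.le α
  have hge1 : (1:ℝ) ≤ sg / sa := by
    rw [← hsqdiv]
    rw [show (1:ℝ) = Real.sqrt 1 from (Real.sqrt_one).symm]
    exact Real.sqrt_le_sqrt ((one_le_div hα).mpr hγα)
  -- conclude
  have hw0 : (0:ℝ) ≤ ‖w‖ := norm_nonneg w
  have hfin : ‖eu‖ ≤ ‖r₁‖ / α + 2 * (sg / sa) * (‖r₂‖ / β) := by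
    have h3 : (sg / sa) * ‖w‖ + ‖w‖ ≤ 2 * (sg / sa) * ‖w‖ := by nlinarith
    have h4 : 2 * (sg / sa) * ‖w‖ ≤ 2 * (sg / sa) * (‖r₂‖ / β) := by
      apply mul_le_mul_of_nonneg_left hwle
      positivity
    linarith [heuz, hzfin]
  rw [hsqdiv]
  calc ‖eu‖ ≤ ‖r₁‖ / α + 2 * (sg / sa) * (‖r₂‖ / β) := hfin
    _ = (1 / α) * ‖r₁‖ + (2 / β) * (sg / sa) * ‖r₂‖ := by ring
end

section
/- Under the same hypotheses (a symmetric continuous coercive with constants γ, α; b continuous with inf-sup constant β > 0; (e_u,e_p) solving the saddle-point system with data r₁ ∈ V', r₂ ∈ Q'), the pressure component satisfies ‖e_p‖_Q ≤ (2/β)√(γ/α)‖r₁‖_{V'} + (γ/β²)‖r₂‖_{Q'}. -/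
/-!
Let `w` be the Lax–Milgram representer of `r₁` for `a`, and `e = w - eu`. Subtracting the first
equation from `a w v = r₁ v` gives `a e v = b v ep`, so the inf-sup condition and Cauchy–Schwarz
for `a` give `β ‖ep‖ ≤ √γ ‖e‖ₐ` in the energy norm `‖e‖ₐ = √(a e e)`. Testing with `e` and using
the second equation, `‖e‖ₐ² = r₁ e - r₂ ep ≤ (‖r₁‖ / √α + ‖r₂‖ √γ / β) ‖e‖ₐ`. Combining the two
yields `β ‖ep‖ ≤ √(γ / α) ‖r₁‖ + (γ / β) ‖r₂‖`, which is stronger than the claim.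
-/

open Real

lemma le_of_sq_le_mul {s K : ℝ} (hK : 0 ≤ K) (h : s ^ 2 ≤ K * s) : s ≤ K := by
  nlinarith

lemma LinearMap.BilinForm.apply_le_sqrt_mul_sqrt {V : Type*} [AddCommGroup V] [Module ℝ V]
    (a : LinearMap.BilinForm ℝ V) (hsymm : ∀ u v, a u v = a v u) (hpos : ∀ u, 0 ≤ a u u)
    (u v : V) : a u v ≤ √(a u u) * √(a v v) := by
  have hcs : a u v ^ 2 ≤ a u u * a v v := by
    simpa only [sq, ← hsymm v u] using a.apply_mul_apply_le_of_forall_zero_le hpos u v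
  rw [← sqrt_mul (hpos u)]
  exact (le_abs_self _).trans (abs_le_sqrt hcs)

section Coercive

variable {V : Type*} [NormedAddCommGroup V] [InnerProductSpace ℝ V]
  {a : V →ₗ[ℝ] V →ₗ[ℝ] ℝ} {α γ : ℝ}

lemma le_of_coercive_of_bounded (hcont : ∀ u v : V, |a u v| ≤ γ * ‖u‖ * ‖v‖)
    (hcoer : ∀ u : V, α * ‖u‖ ^ 2 ≤ a u u) {u : V} (hu : u ≠ 0) : α ≤ γ := by
  have h : α * ‖u‖ ^ 2 ≤ γ * ‖u‖ ^ 2 := by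
    have h := (hcoer u).trans ((le_abs_self _).trans (hcont u u))
    rwa [mul_assoc, ← sq] at h
  exact le_of_mul_le_mul_right h (by positivity)

lemma apply_self_nonneg_of_coercive (hα : 0 ≤ α) (hcoer : ∀ u : V, α * ‖u‖ ^ 2 ≤ a u u)
    (u : V) : 0 ≤ a u u :=
  (by positivity : 0 ≤ α * ‖u‖ ^ 2).trans (hcoer u)

lemma sqrt_apply_self_le (hcont : ∀ u v : V, |a u v| ≤ γ * ‖u‖ * ‖v‖) (u : V) :
    √(a u u) ≤ √γ * ‖u‖ := by
  calc √(a u u) ≤ √(γ * (‖u‖ * ‖u‖)) := by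
        rw [← mul_assoc]; exact sqrt_le_sqrt ((le_abs_self _).trans (hcont u u))
    _ = √γ * ‖u‖ := by rw [sqrt_mul' _ (mul_self_nonneg _), sqrt_mul_self (norm_nonneg u)]

lemma sqrt_mul_norm_le_sqrt_apply_self (hα : 0 < α) (hcoer : ∀ u : V, α * ‖u‖ ^ 2 ≤ a u u)
    (u : V) : √α * ‖u‖ ≤ √(a u u) := by
  calc √α * ‖u‖ = √(α * ‖u‖ ^ 2) := by rw [sqrt_mul hα.le, sqrt_sq (norm_nonneg u)]
    _ ≤ √(a u u) := sqrt_le_sqrt (hcoer u)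

lemma le_sqrt_mul_sqrt_apply_self_of_mul_norm_le (hsymm : ∀ u v : V, a u v = a v u)
    (hcont : ∀ u v : V, |a u v| ≤ γ * ‖u‖ * ‖v‖) (hpos : ∀ u : V, 0 ≤ a u u) {u v : V}
    (hv : v ≠ 0) {c : ℝ} (h : c * ‖v‖ ≤ a u v) : c ≤ √γ * √(a u u) := by
  refine le_of_mul_le_mul_right ?_ (norm_pos_iff.mpr hv)
  calc c * ‖v‖ ≤ a u v := h
    _ ≤ √(a u u) * √(a v v) := LinearMap.BilinForm.apply_le_sqrt_mul_sqrt a hsymm hpos u v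
    _ ≤ √(a u u) * (√γ * ‖v‖) := by gcongr; exact sqrt_apply_self_le hcont v
    _ = √γ * √(a u u) * ‖v‖ := by ring

lemma sqrt_apply_self_le_of_apply_self_le (hα : 0 < α) (hcoer : ∀ u : V, α * ‖u‖ ^ 2 ≤ a u u)
    {u : V} {R c : ℝ} (hR : 0 ≤ R) (hc : 0 ≤ c) (h : a u u ≤ R * ‖u‖ + c * √(a u u)) :
    √(a u u) ≤ R / √α + c := by
  refine le_of_sq_le_mul (by positivity) ?_
  have hu : ‖u‖ ≤ √(a u u) / √α := by
    rw [le_div_iff₀' (sqrt_pos.2 hα)]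
    exact sqrt_mul_norm_le_sqrt_apply_self hα hcoer u
  calc √(a u u) ^ 2 = a u u := sq_sqrt (apply_self_nonneg_of_coercive hα.le hcoer u)
    _ ≤ R * (√(a u u) / √α) + c * √(a u u) := h.trans (by gcongr)
    _ = (R / √α + c) * √(a u u) := by ring

lemma exists_forall_apply_eq_of_coercive [CompleteSpace V] (hα : 0 < α)
    (hcont : ∀ u v : V, |a u v| ≤ γ * ‖u‖ * ‖v‖) (hcoer : ∀ u : V, α * ‖u‖ ^ 2 ≤ a u u)
    (f : V →L[ℝ] ℝ) : ∃ w : V, ∀ v, a w v = f v := by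
  set A : V →L[ℝ] V →L[ℝ] ℝ := a.mkContinuous₂ γ hcont
  have hA : IsCoercive A := ⟨α, hα, fun u => by simpa [A, sq, mul_assoc] using hcoer u⟩
  refine ⟨hA.continuousLinearEquivOfBilin.symm ((InnerProductSpace.toDual ℝ V).symm f),
    fun v => ?_⟩
  change A _ v = f v
  rw [← hA.continuousLinearEquivOfBilin_apply, ContinuousLinearEquiv.apply_symm_apply,
    InnerProductSpace.toDual_symm_apply]

end Coercive

lemma mul_opNorm_nonneg_of_coercive {V Q : Type*} [NormedAddCommGroup V]
    [InnerProductSpace ℝ V] [NormedAddCommGroup Q] [InnerProductSpace ℝ Q]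
    {a : V →ₗ[ℝ] V →ₗ[ℝ] ℝ} {b : V →ₗ[ℝ] Q →ₗ[ℝ] ℝ} {α γ : ℝ} (hα : 0 < α)
    (hcont : ∀ u v : V, |a u v| ≤ γ * ‖u‖ * ‖v‖) (hcoer : ∀ u : V, α * ‖u‖ ^ 2 ≤ a u u)
    {r : Q →L[ℝ] ℝ} {u : V} (hr : ∀ q, b u q = r q) : 0 ≤ γ * ‖r‖ := by
  rcases eq_or_ne u 0 with rfl | hu
  · have hr₀ : r = 0 := by ext q; simp [← hr q]
    simp [hr₀]
  · exact mul_nonneg (hα.le.trans (le_of_coercive_of_bounded hcont hcoer hu)) (norm_nonneg _)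

theorem stmt_16_general {V Q : Type*}
    [NormedAddCommGroup V] [InnerProductSpace ℝ V] [CompleteSpace V]
    [NormedAddCommGroup Q] [InnerProductSpace ℝ Q]
    (a : V →ₗ[ℝ] V →ₗ[ℝ] ℝ) (b : V →ₗ[ℝ] Q →ₗ[ℝ] ℝ)
    (α γ β : ℝ) (hα : 0 < α) (hβ : 0 < β)
    (hsymm : ∀ u v : V, a u v = a v u)
    (hcont : ∀ u v : V, |a u v| ≤ γ * ‖u‖ * ‖v‖)
    (hcoer : ∀ u : V, α * ‖u‖ ^ 2 ≤ a u u)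
    (hinfsup : ∀ q : Q, q ≠ 0 → ∃ v : V, v ≠ 0 ∧ β * ‖q‖ * ‖v‖ ≤ b v q)
    (r₁ : V →L[ℝ] ℝ) (r₂ : Q →L[ℝ] ℝ) (eu : V) (ep : Q)
    (h1 : ∀ v : V, a eu v + b v ep = r₁ v)
    (h2 : ∀ q : Q, b eu q = r₂ q) :
    ‖ep‖ ≤ (2 / β) * Real.sqrt (γ / α) * ‖r₁‖ + (γ / β ^ 2) * ‖r₂‖ := by
  obtain ⟨w, hw⟩ := exists_forall_apply_eq_of_coercive hα hcont hcoer r₁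
  set e := w - eu
  have he : ∀ v, a e v = b v ep := fun v => by
    rw [LinearMap.map_sub₂, hw, ← h1 v]; ring
  rcases eq_or_ne ep 0 with rfl | hep
  · rw [norm_zero, div_mul_eq_mul_div γ]
    exact add_nonneg (by positivity)
      (div_nonneg (mul_opNorm_nonneg_of_coercive hα hcont hcoer h2) (sq_nonneg β))
  obtain ⟨v₀, hv₀, hbv₀⟩ := hinfsup ep hep
  have hγ : 0 ≤ γ := hα.le.trans (le_of_coercive_of_bounded hcont hcoer hv₀)
  have hinf : ‖ep‖ ≤ √γ / β * √(a e e) := by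
    rw [div_mul_eq_mul_div, le_div_iff₀' hβ]
    exact le_sqrt_mul_sqrt_apply_self_of_mul_norm_le hsymm hcont
      (apply_self_nonneg_of_coercive hα.le hcoer) hv₀ ((he v₀).symm ▸ hbv₀)
  have henergy : a e e ≤ ‖r₁‖ * ‖e‖ + ‖r₂‖ * (√γ / β) * √(a e e) := by
    have hr₁ : r₁ e ≤ ‖r₁‖ * ‖e‖ := (le_abs_self _).trans (r₁.le_opNorm e)
    have hr₂ : -r₂ ep ≤ ‖r₂‖ * ‖ep‖ := (neg_le_abs _).trans (r₂.le_opNorm ep)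
    calc a e e = r₁ e - r₂ ep := by rw [LinearMap.map_sub₂, hw, hsymm eu, he, h2]
      _ ≤ ‖r₁‖ * ‖e‖ + ‖r₂‖ * ‖ep‖ := by linarith
      _ ≤ ‖r₁‖ * ‖e‖ + ‖r₂‖ * (√γ / β * √(a e e)) := by gcongr
      _ = _ := by ring
  calc ‖ep‖ ≤ √γ / β * √(a e e) := hinf
    _ ≤ √γ / β * (‖r₁‖ / √α + ‖r₂‖ * (√γ / β)) := by
      gcongr
      exact sqrt_apply_self_le_of_apply_self_le hα hcoer (by positivity) (by positivity) henergy
    _ = 1 / β * √(γ / α) * ‖r₁‖ + √γ * √γ / β ^ 2 * ‖r₂‖ := by rw [sqrt_div' γ hα.le]; ring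
    _ ≤ 2 / β * √(γ / α) * ‖r₁‖ + γ / β ^ 2 * ‖r₂‖ := by
      rw [mul_self_sqrt hγ]; gcongr; norm_num

theorem stmt_16 {V Q : Type*}
    [NormedAddCommGroup V] [InnerProductSpace ℝ V] [CompleteSpace V]
    [NormedAddCommGroup Q] [InnerProductSpace ℝ Q] [CompleteSpace Q]
    (a : V →ₗ[ℝ] V →ₗ[ℝ] ℝ) (b : V →ₗ[ℝ] Q →ₗ[ℝ] ℝ)
    (α γ β : ℝ) (hα : 0 < α) (hβ : 0 < β)
    (hsymm : ∀ u v : V, a u v = a v u)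
    (hcont : ∀ u v : V, |a u v| ≤ γ * ‖u‖ * ‖v‖)
    (hcoer : ∀ u : V, α * ‖u‖ ^ 2 ≤ a u u)
    (hbcont : ∃ C : ℝ, ∀ (v : V) (q : Q), |b v q| ≤ C * ‖v‖ * ‖q‖)
    (hinfsup : ∀ q : Q, q ≠ 0 → ∃ v : V, v ≠ 0 ∧ β * ‖q‖ * ‖v‖ ≤ b v q)
    (r₁ : V →L[ℝ] ℝ) (r₂ : Q →L[ℝ] ℝ) (eu : V) (ep : Q)
    (h1 : ∀ v : V, a eu v + b v ep = r₁ v)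
    (h2 : ∀ q : Q, b eu q = r₂ q) :
    ‖ep‖ ≤ (2 / β) * Real.sqrt (γ / α) * ‖r₁‖ + (γ / β ^ 2) * ‖r₂‖ :=
  stmt_16_general a b α γ β hα hβ hsymm hcont hcoer hinfsup r₁ r₂ eu ep h1 h2
end

section
/- Let V, Q be Hilbert spaces satisfying the hypotheses of the Brezzi theorem (a symmetric, continuous with constant γ, coercive with constant α > 0; b continuous with inf-sup constant β > 0). Then the solution of the saddle-point problem a(u,v)+b(v,p)=ℓ₁(v), b(u,q)=ℓ₂(q) is unique: if (u₁,p₁) and (u₂,p₂) both solve the system with the same ℓ₁ ∈ V', ℓ₂ ∈ Q', then u₁ = u₂ and p₁ = p₂. -/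
theorem stmt_17 {V Q : Type*}
    [NormedAddCommGroup V] [InnerProductSpace ℝ V] [CompleteSpace V]
    [NormedAddCommGroup Q] [InnerProductSpace ℝ Q] [CompleteSpace Q]
    (a : V →ₗ[ℝ] V →ₗ[ℝ] ℝ) (b : V →ₗ[ℝ] Q →ₗ[ℝ] ℝ)
    (α γ β : ℝ) (hα : 0 < α) (hβ : 0 < β)
    (hsymm : ∀ u v : V, a u v = a v u)
    (hcont : ∀ u v : V, |a u v| ≤ γ * ‖u‖ * ‖v‖)
    (hcoer : ∀ u : V, α * ‖u‖ ^ 2 ≤ a u u)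
    (hbcont : ∃ C : ℝ, ∀ (v : V) (q : Q), |b v q| ≤ C * ‖v‖ * ‖q‖)
    (hinfsup : ∀ q : Q, q ≠ 0 → ∃ v : V, v ≠ 0 ∧ β * ‖q‖ * ‖v‖ ≤ b v q)
    (ℓ₁ : V →L[ℝ] ℝ) (ℓ₂ : Q →L[ℝ] ℝ)
    (u₁ u₂ : V) (p₁ p₂ : Q)
    (h11 : ∀ v : V, a u₁ v + b v p₁ = ℓ₁ v) (h12 : ∀ q : Q, b u₁ q = ℓ₂ q)
    (h21 : ∀ v : V, a u₂ v + b v p₂ = ℓ₁ v) (h22 : ∀ q : Q, b u₂ q = ℓ₂ q) :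
    u₁ = u₂ ∧ p₁ = p₂ := by
  set w := u₁ - u₂ with hw
  set r := p₁ - p₂ with hr
  have hA : ∀ v : V, a w v + b v r = 0 := by
    intro v
    have := h11 v
    have := h21 v
    simp only [hw, hr, map_sub, LinearMap.sub_apply]
    linarith
  have hB : ∀ q : Q, b w q = 0 := by
    intro q
    have := h12 q
    have := h22 q
    simp only [hw, map_sub, LinearMap.sub_apply]
    linarith
  have haww : a w w = 0 := by
    have h1 := hA w
    have h2 := hB r
    linarith
  have hw0 : w = 0 := by
    by_contra h
    have : α * ‖w‖ ^ 2 ≤ 0 := haww ▸ hcoer w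
    have hn : 0 < ‖w‖ := norm_pos_iff.mpr h
    nlinarith [mul_pos hα (pow_pos hn 2)]
  have hu : u₁ = u₂ := sub_eq_zero.mp hw0
  refine ⟨hu, ?_⟩
  by_contra h
  have hr0 : r ≠ 0 := sub_ne_zero.mpr h
  obtain ⟨v, hv0, hvle⟩ := hinfsup r hr0
  have hbvr : b v r = 0 := by
    have := hA v
    have : a w v = 0 := by rw [hw0]; simp
    linarith [hA v]
  rw [hbvr] at hvle
  have h1 : 0 < ‖r‖ := norm_pos_iff.mpr hr0
  have h2 : 0 < ‖v‖ := norm_pos_iff.mpr hv0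
  nlinarith [mul_pos (mul_pos hβ h1) h2]
end

section
/- Let S, T be finite subsets of {1,…,M} and suppose quadrature rules with product weights are given on Θ_S and Θ_T with matching one-dimensional rules on S ∩ T. Define, for φ_S : Θ_S → ℝ and each fixed ξ̂ ∈ Θ_{S∩T}, Z_{S∖T}(ξ̂) = Σ over ξ_S ∈ Θ_S restricting to ξ̂ on S∩T of w_S(ξ_S) φ_S(ξ_S), and similarly Z_{T∖S}(ξ̂) for φ_T : Θ_T → ℝ. Then Σ_{ξ ∈ Θ_{S∪T}} w_{S∪T}(ξ) φ_S(ξ|_S) φ_T(ξ|_T) = Σ_{ξ̂ ∈ Θ_{S∩T}} (1/w_{S∩T}(ξ̂)) Z_{S∖T}(ξ̂) Z_{T∖S}(ξ̂), provided all weights w_{S∩T}(ξ̂) are nonzero. -/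
open Finset

private lemma prod_subtype_eq' {M : ℕ} (A : Finset (Fin M)) (f : Fin M → ℝ → ℝ)
    (ξ : {i // i ∈ A} → ℝ) (g : Fin M → ℝ) (h : ∀ (i : Fin M) (hi : i ∈ A), g i = ξ ⟨i, hi⟩) :
    (∏ i : {i // i ∈ A}, f i.1 (ξ i)) = ∏ i ∈ A, f i (g i) := by
  rw [← Finset.prod_attach A (fun i => f i (g i))]
  rw [show (Finset.univ : Finset {i // i ∈ A}) = A.attach from rfl]
  exact Finset.prod_congr rfl (fun i _ => by rw [h i.1 i.2])

private lemma weight_split' {M : ℕ} (w : Fin M → ℝ → ℝ) (S T : Finset (Fin M))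
    (ξ : {i // i ∈ S ∪ T} → ℝ) :
    (∏ i : {i // i ∈ S ∪ T}, w i.1 (ξ i)) *
      (∏ i : {i // i ∈ S ∩ T}, w i.1 (ξ ⟨i.1, Finset.mem_union_left T (Finset.mem_inter.mp i.2).1⟩)) =
    (∏ i : {i // i ∈ S}, w i.1 (ξ ⟨i.1, Finset.mem_union_left T i.2⟩)) *
      (∏ i : {i // i ∈ T}, w i.1 (ξ ⟨i.1, Finset.mem_union_right S i.2⟩)) := by
  classical
  set g : Fin M → ℝ := fun i => if h : i ∈ S ∪ T then ξ ⟨i, h⟩ else 0 with hg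
  have hgdef : ∀ (i : Fin M) (h : i ∈ S ∪ T), g i = ξ ⟨i, h⟩ := by
    intro i h; rw [hg]; exact dif_pos h
  rw [prod_subtype_eq' (S ∪ T) w ξ g (fun i hi => hgdef i hi),
    prod_subtype_eq' (S ∩ T) w _ g
      (fun i hi => hgdef i (Finset.mem_union_left T (Finset.mem_inter.mp hi).1)),
    prod_subtype_eq' S w _ g (fun i hi => hgdef i (Finset.mem_union_left T hi)),
    prod_subtype_eq' T w _ g (fun i hi => hgdef i (Finset.mem_union_right S hi))]
  exact Finset.prod_union_inter

open Classical in
theorem stmt_19 {M : ℕ} (Θ : Fin M → Finset ℝ) (w : Fin M → ℝ → ℝ)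
    (S T : Finset (Fin M))
    (φS : ({ i // i ∈ S } → ℝ) → ℝ) (φT : ({ i // i ∈ T } → ℝ) → ℝ)
    (hw : ∀ ξ0 ∈ Fintype.piFinset (fun i : { i // i ∈ S ∩ T } => Θ i.1),
      (∏ i : { i // i ∈ S ∩ T }, w i.1 (ξ0 i)) ≠ 0) :
    (∑ ξ ∈ Fintype.piFinset (fun i : { i // i ∈ S ∪ T } => Θ i.1),
        (∏ i : { i // i ∈ S ∪ T }, w i.1 (ξ i)) *
          (φS (fun i => ξ ⟨i.1, Finset.mem_union_left T i.2⟩) *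
            φT (fun i => ξ ⟨i.1, Finset.mem_union_right S i.2⟩))) =
      ∑ ξ0 ∈ Fintype.piFinset (fun i : { i // i ∈ S ∩ T } => Θ i.1),
        (1 / ∏ i : { i // i ∈ S ∩ T }, w i.1 (ξ0 i)) *
          ((∑ ξS ∈ Fintype.piFinset (fun i : { i // i ∈ S } => Θ i.1),
              if ∀ i : { i // i ∈ S ∩ T }, ξS ⟨i.1, (Finset.mem_inter.mp i.2).1⟩ = ξ0 i
              then (∏ i : { i // i ∈ S }, w i.1 (ξS i)) * φS ξS else 0) *
            (∑ ξT ∈ Fintype.piFinset (fun i : { i // i ∈ T } => Θ i.1),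
              if ∀ i : { i // i ∈ S ∩ T }, ξT ⟨i.1, (Finset.mem_inter.mp i.2).2⟩ = ξ0 i
              then (∏ i : { i // i ∈ T }, w i.1 (ξT i)) * φT ξT else 0)) := by
  classical
  -- restriction maps
  set rSI : ({i // i ∈ S} → ℝ) → {i // i ∈ S ∩ T} → ℝ :=
    fun ξ i => ξ ⟨i.1, (Finset.mem_inter.mp i.2).1⟩ with hrSI
  set rTI : ({i // i ∈ T} → ℝ) → {i // i ∈ S ∩ T} → ℝ :=
    fun ξ i => ξ ⟨i.1, (Finset.mem_inter.mp i.2).2⟩ with hrTI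
  -- the middle sum over agreeing pairs
  have hmid :
      (∑ p ∈ ((Fintype.piFinset (fun i : {i // i ∈ S} => Θ i.1)) ×ˢ
          (Fintype.piFinset (fun i : {i // i ∈ T} => Θ i.1))).filter
          (fun p => rTI p.2 = rSI p.1),
        (1 / ∏ i : { i // i ∈ S ∩ T }, w i.1 (rSI p.1 i)) *
          (((∏ i : { i // i ∈ S }, w i.1 (p.1 i)) * φS p.1) *
            ((∏ i : { i // i ∈ T }, w i.1 (p.2 i)) * φT p.2))) =
      (∑ ξ0 ∈ Fintype.piFinset (fun i : { i // i ∈ S ∩ T } => Θ i.1),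
        (1 / ∏ i : { i // i ∈ S ∩ T }, w i.1 (ξ0 i)) *
          ((∑ ξS ∈ Fintype.piFinset (fun i : { i // i ∈ S } => Θ i.1),
              if ∀ i : { i // i ∈ S ∩ T }, ξS ⟨i.1, (Finset.mem_inter.mp i.2).1⟩ = ξ0 i
              then (∏ i : { i // i ∈ S }, w i.1 (ξS i)) * φS ξS else 0) *
            (∑ ξT ∈ Fintype.piFinset (fun i : { i // i ∈ T } => Θ i.1),
              if ∀ i : { i // i ∈ S ∩ T }, ξT ⟨i.1, (Finset.mem_inter.mp i.2).2⟩ = ξ0 i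
              then (∏ i : { i // i ∈ T }, w i.1 (ξT i)) * φT ξT else 0))) := by
    rw [Finset.sum_filter, Finset.sum_product]
    symm
    simp_rw [Finset.sum_mul_sum, Finset.mul_sum]
    rw [Finset.sum_comm]
    refine Finset.sum_congr rfl fun ξS hξS => ?_
    rw [Finset.sum_comm]
    refine Finset.sum_congr rfl fun ξT hξT => ?_
    have hpt : ∀ ξ0 : {i // i ∈ S ∩ T} → ℝ,
        (1 / ∏ i : { i // i ∈ S ∩ T }, w i.1 (ξ0 i)) *
          ((if ∀ i : { i // i ∈ S ∩ T }, ξS ⟨i.1, (Finset.mem_inter.mp i.2).1⟩ = ξ0 i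
            then (∏ i : { i // i ∈ S }, w i.1 (ξS i)) * φS ξS else 0) *
           (if ∀ i : { i // i ∈ S ∩ T }, ξT ⟨i.1, (Finset.mem_inter.mp i.2).2⟩ = ξ0 i
            then (∏ i : { i // i ∈ T }, w i.1 (ξT i)) * φT ξT else 0)) =
        if ξ0 = rSI ξS then
          (if rTI ξT = rSI ξS then
            (1 / ∏ i : { i // i ∈ S ∩ T }, w i.1 (ξ0 i)) *
              ((∏ i : { i // i ∈ S }, w i.1 (ξS i)) * φS ξS *
                ((∏ i : { i // i ∈ T }, w i.1 (ξT i)) * φT ξT))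
          else 0) else 0 := by
      intro ξ0
      by_cases h1 : ξ0 = rSI ξS
      · rw [if_pos h1]
        have hc1 : ∀ i : { i // i ∈ S ∩ T }, ξS ⟨i.1, (Finset.mem_inter.mp i.2).1⟩ = ξ0 i :=
          fun i => by rw [h1]
        rw [if_pos hc1]
        by_cases h2 : rTI ξT = rSI ξS
        · rw [if_pos h2]
          have hc2 : ∀ i : { i // i ∈ S ∩ T }, ξT ⟨i.1, (Finset.mem_inter.mp i.2).2⟩ = ξ0 i :=
            fun i => by rw [h1]; exact congrFun h2 i
          rw [if_pos hc2]
        · rw [if_neg h2]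
          have hc2 : ¬ ∀ i : { i // i ∈ S ∩ T }, ξT ⟨i.1, (Finset.mem_inter.mp i.2).2⟩ = ξ0 i := by
            intro h; exact h2 ((funext h).trans h1)
          rw [if_neg hc2, mul_zero, mul_zero]
      · rw [if_neg h1]
        have hc1 : ¬ ∀ i : { i // i ∈ S ∩ T }, ξS ⟨i.1, (Finset.mem_inter.mp i.2).1⟩ = ξ0 i := by
          intro h; exact h1 (funext h).symm
        rw [if_neg hc1, zero_mul, mul_zero]
    rw [Finset.sum_congr rfl (fun ξ0 _ => hpt ξ0), Finset.sum_ite_eq' _ (rSI ξS)]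
    rw [if_pos (show rSI ξS ∈ _ from
      Fintype.mem_piFinset.mpr fun i => Fintype.mem_piFinset.mp hξS _)]
  rw [← hmid]
  -- bijection between Θ_{S∪T} and agreeing pairs
  refine Finset.sum_nbij'
    (fun ξ => (fun i => ξ ⟨i.1, Finset.mem_union_left T i.2⟩,
               fun i => ξ ⟨i.1, Finset.mem_union_right S i.2⟩))
    (fun p => fun i => if h : i.1 ∈ S then p.1 ⟨i.1, h⟩
        else p.2 ⟨i.1, Or.resolve_left (Finset.mem_union.mp i.2) h⟩)
    ?_ ?_ ?_ ?_ ?_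
  · intro ξ hξ
    rw [Fintype.mem_piFinset] at hξ
    rw [Finset.mem_filter]
    refine ⟨Finset.mem_product.mpr ⟨?_, ?_⟩, ?_⟩
    · exact Fintype.mem_piFinset.mpr (fun i => hξ _)
    · exact Fintype.mem_piFinset.mpr (fun i => hξ _)
    · funext i; rfl
  · intro p hp
    rw [Finset.mem_filter, Finset.mem_product] at hp
    have h1 := Fintype.mem_piFinset.mp hp.1.1
    have h2 := Fintype.mem_piFinset.mp hp.1.2
    refine Fintype.mem_piFinset.mpr (fun i => ?_)
    split
    · exact h1 _
    · exact h2 _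
  · intro ξ hξ
    funext i
    dsimp only
    split
    · rfl
    · rfl
  · intro p hp
    rw [Finset.mem_filter] at hp
    have hagree := hp.2
    refine Prod.ext ?_ ?_
    · funext i
      dsimp only
      rw [dif_pos i.2]
    · funext i
      dsimp only
      by_cases h : i.1 ∈ S
      · rw [dif_pos h]
        have : (⟨i.1, Finset.mem_inter.mpr ⟨h, i.2⟩⟩ : {j // j ∈ S ∩ T}) ∈ (S ∩ T).attach :=
          Finset.mem_attach _ _
        have := congrFun hagree ⟨i.1, Finset.mem_inter.mpr ⟨h, i.2⟩⟩
        simpa [hrTI, hrSI] using this.symm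
      · rw [dif_neg h]
  · intro ξ hξ
    dsimp only
    have hmem : (fun i : {i // i ∈ S ∩ T} =>
        ξ ⟨i.1, Finset.mem_union_left T (Finset.mem_inter.mp i.2).1⟩) ∈
        Fintype.piFinset (fun i : { i // i ∈ S ∩ T } => Θ i.1) :=
      Fintype.mem_piFinset.mpr (fun i => Fintype.mem_piFinset.mp hξ _)
    have hW0 := hw _ hmem
    have hws := weight_split' w S T ξ
    have hrw : rSI (fun i => ξ ⟨i.1, Finset.mem_union_left T i.2⟩) =
        (fun i : {i // i ∈ S ∩ T} =>
          ξ ⟨i.1, Finset.mem_union_left T (Finset.mem_inter.mp i.2).1⟩) := rfl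
    rw [hrw]
    set W0 := ∏ i : { i // i ∈ S ∩ T }, w i.1
      (ξ ⟨i.1, Finset.mem_union_left T (Finset.mem_inter.mp i.2).1⟩) with hW0def
    set WU := ∏ i : {i // i ∈ S ∪ T}, w i.1 (ξ i)
    set WS := ∏ i : { i // i ∈ S }, w i.1 (ξ ⟨i.1, Finset.mem_union_left T i.2⟩)
    set WT := ∏ i : { i // i ∈ T }, w i.1 (ξ ⟨i.1, Finset.mem_union_right S i.2⟩)
    have hWU : WU = WS * WT / W0 := (eq_div_iff hW0).mpr hws
    rw [hWU]; ring
end
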